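/- Let p1, p, pj be three points in ℝ² with x(p1) < x(p) < x(pj) and y(p) < y(pj), appearing in clockwise (right-turn) order as p1 → p → pj (i.e., on an upper convex hull). Then the angle ∠p1 p pj is at least 90°, and hence if |p1 pj| ≤ 1 then |p pj| ≤ 1. -/

import Mathlib

/-!
With `u = p - p1` and `v = pj - p`, the right turn says `cross u v < 0`; as `v` points into the open
first quadrant and `u` to the right, this forces `u` into that quadrant too, so `⟪u, v⟫ > 0`. Hence
`⟪p1 - p, pj - p⟫ < 0`, the angle at `p` is obtuse, and by the law of cosines `p1 pj` is the
longest side of the triangle.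
-/

open EuclideanGeometry

/-- Cross product of two planar vectors. -/
def cross (u v : EuclideanSpace ℝ (Fin 2)) : ℝ := u 0 * v 1 - u 1 * v 0

open RealInnerProductSpace

theorem InnerProductGeometry.pi_div_two_le_angle_of_inner_nonpos {V : Type*}
    [NormedAddCommGroup V] [InnerProductSpace ℝ V] {x y : V} (h : ⟪x, y⟫ ≤ 0) :
    Real.pi / 2 ≤ angle x y :=
  not_lt.1 fun hlt => (Real.arccos_lt_pi_div_two.1 hlt).not_ge <|
    div_nonpos_of_nonpos_of_nonneg h (by positivity)

theorem EuclideanGeometry.dist_le_dist_of_pi_div_two_le_angle {V P : Type*}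
    [NormedAddCommGroup V] [InnerProductSpace ℝ V] [MetricSpace P] [NormedAddTorsor V P]
    {p₁ p₂ p₃ : P} (h : Real.pi / 2 ≤ ∠ p₁ p₂ p₃) : dist p₂ p₃ ≤ dist p₁ p₃ := by
  have hcos : Real.cos (∠ p₁ p₂ p₃) ≤ 0 :=
    Real.cos_nonpos_of_pi_div_two_le_of_le h (by linarith [angle_le_pi p₁ p₂ p₃, Real.pi_pos])
  have hsq : dist p₂ p₃ ^ 2 ≤ dist p₁ p₃ ^ 2 := by
    have hlaw := law_cos p₁ p₂ p₃
    rw [dist_comm p₂ p₃]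
    nlinarith [mul_nonpos_of_nonneg_of_nonpos (mul_nonneg (dist_nonneg (x := p₁) (y := p₂))
        (dist_nonneg (x := p₃) (y := p₂))) hcos]
  exact (pow_le_pow_iff_left₀ dist_nonneg dist_nonneg two_ne_zero).1 hsq

theorem cross_self_add (u v : EuclideanSpace ℝ (Fin 2)) : cross u (u + v) = cross u v := by
  simp only [cross, PiLp.add_apply]
  ring

theorem inner_pos_of_cross_neg {u v : EuclideanSpace ℝ (Fin 2)} (hu₀ : 0 < u 0) (hv₀ : 0 < v 0)
    (hv₁ : 0 < v 1) (h : cross u v < 0) : 0 < ⟪u, v⟫ := by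
  have hu₁ : 0 < u 1 := by
    have : 0 < u 1 * v 0 := by unfold cross at h; nlinarith [mul_pos hu₀ hv₁]
    exact pos_of_mul_pos_left this hv₀.le
  have hinner : ⟪u, v⟫ = u 0 * v 0 + u 1 * v 1 := by
    simp [PiLp.inner_apply, Fin.sum_univ_two, mul_comm]
  rw [hinner]
  positivity

theorem stmt_3 (p1 p pj : EuclideanSpace ℝ (Fin 2))
    (hx1 : p1 0 < p 0) (hx2 : p 0 < pj 0) (hy : p 1 < pj 1)
    (hcw : cross (p - p1) (pj - p1) < 0) :
    Real.pi / 2 ≤ ∠ p1 p pj ∧ (dist p1 pj ≤ 1 → dist p pj ≤ 1) := by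
  have hcw' : cross (p - p1) (pj - p) < 0 := by
    rwa [← cross_self_add, sub_add_sub_cancel']
  have hinner : ⟪p1 -ᵥ p, pj -ᵥ p⟫ ≤ 0 := by
    rw [vsub_eq_sub, vsub_eq_sub, ← neg_sub, inner_neg_left, neg_nonpos]
    refine (inner_pos_of_cross_neg ?_ ?_ ?_ hcw').le <;> simpa
  have hangle : Real.pi / 2 ≤ ∠ p1 p pj :=
    InnerProductGeometry.pi_div_two_le_angle_of_inner_nonpos hinner
  exact ⟨hangle, (dist_le_dist_of_pi_div_two_le_angle hangle).trans⟩
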